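/- arXiv:1012.1630 — 2 statements merged into one kernel-verified Lean document; each statement's English description precedes it below -/
import Mathlib

section
/- For any 0 < r ≤ n: e_r(x_1,...,x_r) = (-1)^r · ẽ_r(x_{r+1},...,x_n) + Σ_{t=1}^{r} (-1)^{t+1} · e_{r-t}(x_{t+1},...,x_r) · ẽ_t(x_t,...,x_n). -/
open MvPolynomial

/-- The index set of variables `x_a, x_{a+1}, ..., x_b` (1-indexed) among `x_1, ..., x_n`. -/
def seg (n a b : ℕ) : Finset (Fin n) :=
  Finset.univ.filter fun i => a ≤ (i : ℕ) + 1 ∧ (i : ℕ) + 1 ≤ b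

/-- Truncated elementary symmetric polynomial of degree `d` in the variables indexed by `S`. -/
noncomputable def ee (n : ℕ) (d : ℤ) (S : Finset (Fin n)) : MvPolynomial (Fin n) ℤ :=
  if 0 ≤ d then ∑ A ∈ S.powersetCard d.toNat, ∏ i ∈ A, X i else 0

/-- Truncated complete homogeneous symmetric polynomial of degree `d` in variables indexed by `S`. -/
noncomputable def te (n : ℕ) (d : ℤ) (S : Finset (Fin n)) : MvPolynomial (Fin n) ℤ :=
  if 0 ≤ d then ∑ m ∈ S.sym d.toNat, ((m : Multiset (Fin n)).map X).prod else 0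

/-! ### Auxiliary definitions and lemmas -/

noncomputable def eeN (n k : ℕ) (S : Finset (Fin n)) : MvPolynomial (Fin n) ℤ :=
  ∑ A ∈ S.powersetCard k, ∏ i ∈ A, X i

noncomputable def teN (n k : ℕ) (S : Finset (Fin n)) : MvPolynomial (Fin n) ℤ :=
  ∑ m ∈ S.sym k, ((m : Multiset (Fin n)).map X).prod

lemma ee_eq (n k : ℕ) (S : Finset (Fin n)) : ee n (k : ℤ) S = eeN n k S := by
  simp [ee, eeN]

lemma te_eq (n k : ℕ) (S : Finset (Fin n)) : te n (k : ℤ) S = teN n k S := by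
  simp [te, teN]

lemma eeN_zero (n : ℕ) (S : Finset (Fin n)) : eeN n 0 S = 1 := by
  simp [eeN]

lemma teN_zero (n : ℕ) (S : Finset (Fin n)) : teN n 0 S = 1 := by
  have : ((∅ : Sym (Fin n) 0) : Multiset (Fin n)) = 0 := rfl
  simp [teN, this]

lemma eeN_eq_zero (n k : ℕ) (S : Finset (Fin n)) (h : S.card < k) : eeN n k S = 0 := by
  rw [eeN, Finset.powersetCard_eq_empty.mpr h, Finset.sum_empty]

lemma eeN_insert (n k : ℕ) (a : Fin n) (S : Finset (Fin n)) (ha : a ∉ S) :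
    eeN n (k + 1) (insert a S) = eeN n (k + 1) S + X a * eeN n k S := by
  unfold eeN
  rw [Finset.powersetCard_succ_insert ha, Finset.sum_union, Finset.sum_image]
  · congr 1
    rw [Finset.mul_sum]
    refine Finset.sum_congr rfl fun A hA => ?_
    exact Finset.prod_insert fun haA => ha ((Finset.mem_powersetCard.mp hA).1 haA)
  · intro A hA B hB hAB
    have haA : a ∉ A := fun h => ha ((Finset.mem_powersetCard.mp hA).1 h)
    have haB : a ∉ B := fun h => ha ((Finset.mem_powersetCard.mp hB).1 h)
    rw [← Finset.erase_insert haA, ← Finset.erase_insert haB, hAB]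
  · rw [Finset.disjoint_left]
    rintro A hA hA'
    obtain ⟨B, _, rfl⟩ := Finset.mem_image.mp hA'
    exact ha ((Finset.mem_powersetCard.mp hA).1 (Finset.mem_insert_self a B))

lemma teN_insert (n k : ℕ) (a : Fin n) (S : Finset (Fin n)) (ha : a ∉ S) :
    teN n (k + 1) (insert a S) = X a * teN n k (insert a S) + teN n (k + 1) S := by
  have hset : (insert a S).sym (k + 1)
      = ((insert a S).sym k).image (Sym.cons a) ∪ S.sym (k + 1) := by
    ext m
    simp only [Finset.mem_union, Finset.mem_image, Finset.mem_sym_iff, Finset.mem_insert]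
    constructor
    · intro hm
      by_cases haM : a ∈ m
      · obtain ⟨m', rfl⟩ := Sym.exists_cons_of_mem haM
        exact Or.inl ⟨m', fun b hb => hm b (Sym.mem_cons_of_mem hb), rfl⟩
      · refine Or.inr fun b hb => (hm b hb).resolve_left ?_
        rintro rfl; exact haM hb
    · rintro (⟨m', hm', rfl⟩ | hm)
      · intro b hb
        rcases Sym.mem_cons.mp hb with rfl | hb
        · exact Or.inl rfl
        · exact hm' b hb
      · exact fun b hb => Or.inr (hm b hb)
  unfold teN
  rw [hset, Finset.sum_union, Finset.sum_image]
  · congr 1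
    rw [Finset.mul_sum]
    refine Finset.sum_congr rfl fun m hm => ?_
    rw [Sym.coe_cons, Multiset.map_cons, Multiset.prod_cons]
  · intro m _ m' _ h; exact (Sym.cons_inj_right a m m').mp h
  · rw [Finset.disjoint_left]
    rintro m hm' hm
    obtain ⟨m', _, rfl⟩ := Finset.mem_image.mp hm'
    exact ha (Finset.mem_sym_iff.mp hm a (Sym.mem_cons_self a m'))

lemma mem_seg {n a b : ℕ} {i : Fin n} : i ∈ seg n a b ↔ a ≤ (i : ℕ) + 1 ∧ (i : ℕ) + 1 ≤ b := by
  simp [seg]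

lemma seg_insert (n t b : ℕ) (ht : 1 ≤ t) (htb : t ≤ b) (hbn : b ≤ n) :
    seg n t b = insert (⟨t - 1, by omega⟩ : Fin n) (seg n (t + 1) b) := by
  ext i
  simp only [Finset.mem_insert, mem_seg, Fin.ext_iff]
  omega

lemma not_mem_seg (n t b : ℕ) (ht : 1 ≤ t) (h : t - 1 < n) :
    (⟨t - 1, h⟩ : Fin n) ∉ seg n (t + 1) b := by
  simp only [mem_seg, not_and]
  omega

lemma seg_card_le (n t b : ℕ) : (seg n (t + 1) b).card ≤ b - t := by
  have : (seg n (t + 1) b).card = ((seg n (t + 1) b).image Fin.val).card :=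
    (Finset.card_image_of_injective _ Fin.val_injective).symm
  rw [this]
  have hsub : (seg n (t + 1) b).image Fin.val ⊆ Finset.Ico t b := by
    intro x hx
    obtain ⟨i, hi, rfl⟩ := Finset.mem_image.mp hx
    rw [mem_seg] at hi
    rw [Finset.mem_Ico]
    omega
  calc ((seg n (t + 1) b).image Fin.val).card ≤ (Finset.Ico t b).card :=
        Finset.card_le_card hsub
    _ = b - t := Nat.card_Ico t b

lemma telescope {R : Type*} [CommRing R] (G : ℕ → R) (r : ℕ) :
    ∑ t ∈ Finset.Icc 1 r, (-1 : R) ^ (t + 1) * (G (t - 1) + G t)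
      = G 0 + (-1 : R) ^ (r + 1) * G r := by
  induction r with
  | zero => simp
  | succ m ih =>
      rw [Finset.sum_Icc_succ_top (by omega), ih]
      simp only [Nat.add_sub_cancel]
      ring

theorem stmt6 (n r : ℕ) (hr : 0 < r) (hrn : r ≤ n) :
    ee n r (seg n 1 r) =
      (-1 : MvPolynomial (Fin n) ℤ) ^ r * te n r (seg n (r + 1) n) +
        ∑ t ∈ Finset.Icc 1 r,
          (-1 : MvPolynomial (Fin n) ℤ) ^ (t + 1) *
            (ee n ((r : ℤ) - t) (seg n (t + 1) r) * te n t (seg n t n)) := by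
  set F : ℕ → MvPolynomial (Fin n) ℤ :=
    fun t => eeN n (r - t) (seg n (t + 1) r) * teN n t (seg n (t + 1) n) with hF
  have key : ∀ t ∈ Finset.Icc 1 r,
      (-1 : MvPolynomial (Fin n) ℤ) ^ (t + 1) *
          (ee n ((r : ℤ) - t) (seg n (t + 1) r) * te n t (seg n t n))
        = (-1 : MvPolynomial (Fin n) ℤ) ^ (t + 1) * (F (t - 1) + F t) := by
    intro t ht
    rw [Finset.mem_Icc] at ht
    obtain ⟨ht1, htr⟩ := ht
    obtain ⟨k, rfl⟩ : ∃ k, t = k + 1 := ⟨t - 1, by omega⟩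
    congr 1
    have h1 : ((r : ℤ) - (↑(k + 1) : ℕ)) = ((r - (k + 1) : ℕ) : ℤ) := by
      push_cast; omega
    rw [h1, ee_eq, te_eq]
    have hkn : k + 1 - 1 < n := by omega
    set a0 : Fin n := (⟨k + 1 - 1, hkn⟩ : Fin n) with ha0
    have hnotN : a0 ∉ seg n (k + 1 + 1) n := not_mem_seg n (k + 1) n (by omega) hkn
    have hnotR : a0 ∉ seg n (k + 1 + 1) r := not_mem_seg n (k + 1) r (by omega) hkn
    have hsegN : seg n (k + 1) n = insert a0 (seg n (k + 1 + 1) n) :=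
      seg_insert n (k + 1) n (by omega) (by omega) le_rfl
    have hsegR : seg n (k + 1) r = insert a0 (seg n (k + 1 + 1) r) :=
      seg_insert n (k + 1) r (by omega) (by omega) hrn
    have hte : teN n (k + 1) (seg n (k + 1) n)
        = X a0 * teN n k (seg n (k + 1) n) + teN n (k + 1) (seg n (k + 1 + 1) n) := by
      rw [hsegN, teN_insert n k a0 _ hnotN]
    have hsplit : r - k = (r - (k + 1)) + 1 := by omega
    have hcard : (seg n (k + 1 + 1) r).card < r - k := by
      have := seg_card_le n (k + 1) r
      omega
    have hee : eeN n (r - k) (seg n (k + 1) r)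
        = X a0 * eeN n (r - (k + 1)) (seg n (k + 1 + 1) r) := by
      rw [hsegR, hsplit, eeN_insert n _ a0 _ hnotR,
        eeN_eq_zero n _ _ (by omega : (seg n (k+1+1) r).card < r - (k+1) + 1), zero_add]
    simp only [hF, Nat.add_sub_cancel]
    rw [hte, hee]
    ring
  rw [Finset.sum_congr rfl key, telescope]
  have hF0 : F 0 = eeN n r (seg n 1 r) := by
    simp [hF, teN_zero]
  have hFr : F r = teN n r (seg n (r + 1) n) := by
    simp [hF, eeN_zero]
  rw [hF0, hFr, ee_eq, te_eq]
  ring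
end

section
/- For any Hessenberg function h, the ideal I_h equals its antidiagonal subideal I_h^{AD} = ⟨ e_{h_i - (i-1)}(x_1,...,x_{h_i}) : i = 1,...,n ⟩; that is, I_h is generated by just the n antidiagonal generators. -/
open MvPolynomial

/-
Expanding along the last variable gives `e_d(x_1,…,x_{m+1}) = e_d(x_1,…,x_m) + x_{m+1} e_{d-1}(x_1,…,x_m)`,
so an ideal containing `e_d(x_1,…,x_a)` for all `d ≥ a - c` also contains `e_d(x_1,…,x_b)` for all
`d ≥ b - c` whenever `b ≥ a`. By induction on `i`, `I_h^{AD}` then contains `e_d(x_1,…,x_{h_i})` for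
every `d ≥ h_i - (i - 1)`: the smallest such `d` gives the antidiagonal generator, the larger ones follow
from the case `i - 1` with `a = h_{i-1} ≤ b = h_i`, and for `i = 1` they vanish because `d > h_1`.
-/

theorem Multiset.esymm_cons_succ {R : Type*} [CommSemiring R] (a : R) (s : Multiset R) (k : ℕ) :
    (a ::ₘ s).esymm (k + 1) = s.esymm (k + 1) + a * s.esymm k := by
  simp [esymm, powersetCard_cons, sum_map_mul_left]

section Segment

variable {n m : ℕ}

lemma seg_one_eq : seg n 1 m = (Finset.univ.filter fun i : Fin n => (i : ℕ) < m) := by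
  ext i
  simp only [seg, Finset.mem_filter, Finset.mem_univ, true_and]
  omega

lemma card_seg_one (hm : m ≤ n) : (seg n 1 m).card = m := by
  rw [seg_one_eq, Fin.card_filter_val_lt, min_eq_right hm]

lemma seg_one_succ (hm : m < n) : seg n 1 (m + 1) = insert ⟨m, hm⟩ (seg n 1 m) := by
  ext i
  simp only [seg_one_eq, Finset.mem_filter, Finset.mem_univ, true_and, Finset.mem_insert,
    Fin.ext_iff]
  omega

lemma notMem_seg_one (hm : m < n) : (⟨m, hm⟩ : Fin n) ∉ seg n 1 m := by
  simp [seg_one_eq]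

end Segment

section ElementarySymmetric

variable {n : ℕ}

lemma ee_natCast (k : ℕ) (S : Finset (Fin n)) : ee n k S = (S.val.map X).esymm k := by
  rw [ee, if_pos (Int.natCast_nonneg k), Int.toNat_natCast, Finset.esymm_map_val]

lemma ee_of_neg {d : ℤ} (hd : d < 0) (S : Finset (Fin n)) : ee n d S = 0 :=
  if_neg hd.not_ge

lemma ee_zero (S : Finset (Fin n)) : ee n 0 S = 1 := by
  simp [ee]

lemma ee_of_card_lt {d : ℤ} {S : Finset (Fin n)} (hd : (S.card : ℤ) < d) : ee n d S = 0 := by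
  rw [ee, if_pos (by omega), Finset.powersetCard_eq_empty.mpr (by omega), Finset.sum_empty]

lemma ee_insert {j : Fin n} {S : Finset (Fin n)} (hj : j ∉ S) (d : ℤ) :
    ee n d (insert j S) = ee n d S + X j * ee n (d - 1) S := by
  rcases lt_or_ge d 0 with hd | hd
  · simp [ee_of_neg hd, ee_of_neg (show d - 1 < 0 by omega)]
  lift d to ℕ using hd
  cases d with
  | zero => simp [ee_zero, ee_of_neg]
  | succ k =>
    rw [show ((k + 1 : ℕ) : ℤ) - 1 = k by omega, ee_natCast, ee_natCast, ee_natCast,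
      Finset.insert_val_of_notMem hj, Multiset.map_cons, Multiset.esymm_cons_succ]

lemma ee_seg_one_succ {m : ℕ} (hm : m < n) (d : ℤ) :
    ee n d (seg n 1 (m + 1)) = ee n d (seg n 1 m) + X ⟨m, hm⟩ * ee n (d - 1) (seg n 1 m) := by
  rw [seg_one_succ hm, ee_insert (notMem_seg_one hm)]

lemma ee_seg_one_mem_of_le {I : Ideal (MvPolynomial (Fin n) ℤ)} {c : ℤ} {a b : ℕ}
    (hab : a ≤ b) (hb : b ≤ n) (ha : ∀ d : ℤ, (a : ℤ) - c ≤ d → ee n d (seg n 1 a) ∈ I) :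
    ∀ d : ℤ, (b : ℤ) - c ≤ d → ee n d (seg n 1 b) ∈ I := by
  induction b, hab using Nat.le_induction with
  | base => exact ha
  | succ m _ ih =>
    intro d hd
    rw [ee_seg_one_succ (by omega)]
    exact I.add_mem (ih (by omega) d (by omega)) (I.mul_mem_left _ (ih (by omega) _ (by omega)))

end ElementarySymmetric

noncomputable def antidiagonalIdeal (n : ℕ) (h : Fin n → ℕ) : Ideal (MvPolynomial (Fin n) ℤ) :=
  Ideal.span (Set.range fun i : Fin n => ee n ((h i : ℤ) - (i : ℕ)) (seg n 1 (h i)))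

theorem ee_seg_one_mem_antidiagonalIdeal {n : ℕ} {h : Fin n → ℕ} (hle : ∀ i, h i ≤ n)
    (hmono : Monotone h) (i : Fin n) (d : ℤ) (hd : (h i : ℤ) - (i : ℕ) ≤ d) :
    ee n d (seg n 1 (h i)) ∈ antidiagonalIdeal n h := by
  obtain ⟨k, hk⟩ := i
  dsimp only at hd ⊢
  induction k generalizing d with
  | zero =>
    obtain rfl | hd := hd.eq_or_lt
    · exact Ideal.subset_span ⟨⟨0, hk⟩, rfl⟩
    rw [ee_of_card_lt (by rw [card_seg_one (hle _)]; omega)]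
    exact Ideal.zero_mem _
  | succ k ih =>
    obtain rfl | hd := hd.eq_or_lt
    · exact Ideal.subset_span ⟨⟨k + 1, hk⟩, rfl⟩
    have hk' : k < n := by omega
    exact ee_seg_one_mem_of_le (c := k) (hmono (Fin.mk_le_mk.mpr (Nat.le_add_right k 1)))
      (hle _) (fun d' => ih d' hk') d (by omega)

theorem stmt16_general (n : ℕ) (h : Fin n → ℕ)
    (hh1 : ∀ i : Fin n, (i : ℕ) + 1 ≤ h i ∧ h i ≤ n)
    (hh2 : ∀ i j : Fin n, i ≤ j → h i ≤ h j) :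
    Ideal.span {p : MvPolynomial (Fin n) ℤ |
        ∃ i : Fin n, ∃ r : ℕ, r ≤ (i : ℕ) ∧ p = ee n ((h i : ℤ) - r) (seg n 1 (h i))} =
      Ideal.span
        (Set.range fun i : Fin n => ee n ((h i : ℤ) - (i : ℕ)) (seg n 1 (h i))) := by
  apply le_antisymm
  · rw [Ideal.span_le]
    rintro _ ⟨i, r, hr, rfl⟩
    exact ee_seg_one_mem_antidiagonalIdeal (fun i => (hh1 i).2) hh2 i _ (by omega)
  · exact Ideal.span_mono fun _ ⟨i, hi⟩ => ⟨i, i, le_rfl, hi.symm⟩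

theorem stmt16 (n : ℕ) (hn : 0 < n) (h : Fin n → ℕ)
    (hh1 : ∀ i : Fin n, (i : ℕ) + 1 ≤ h i ∧ h i ≤ n)
    (hh2 : ∀ i j : Fin n, i ≤ j → h i ≤ h j) :
    Ideal.span {p : MvPolynomial (Fin n) ℤ |
        ∃ i : Fin n, ∃ r : ℕ, r ≤ (i : ℕ) ∧ p = ee n ((h i : ℤ) - r) (seg n 1 (h i))} =
      Ideal.span
        (Set.range fun i : Fin n => ee n ((h i : ℤ) - (i : ℕ)) (seg n 1 (h i))) :=
  stmt16_general n h hh1 hh2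
end
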